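/- Let Q ∈ C^{N×N} be Hermitian, a_1,…,a_T ∈ C^N, and suppose the block matrix [[Q, A],[A^H, I_T]] is positive semidefinite, where A = [a_1 … a_T] ∈ C^{N×T}. If moreover Q satisfies ⟨Θ_q, Q⟩ = 1_{q=0} for q = -N+1,…,N-1, then Σ_{i=1}^T |f(θ)^H a_i|² ≤ 1 for all θ ∈ (0,π). -/

import Mathlib

open Complex Finset Matrix ComplexOrder

noncomputable section

/-- Matrix inner product `⟨A,B⟩ = Σ_{i,l} A_{i,l} conj (B_{i,l})`. -/
def minner {α β : Type*} [Fintype α] [Fintype β] (A B : Matrix α β ℂ) : ℂ :=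
  ∑ i, ∑ l, A i l * (starRingEnd ℂ) (B i l)

/-- Elementary Toeplitz matrix `Θ_q`: ones on the `q`-th diagonal (`l - i = q`). -/
def Theta (N : ℕ) (q : ℤ) : Matrix (Fin N) (Fin N) ℂ :=
  fun i l => if (l.val : ℤ) - (i.val : ℤ) = q then 1 else 0

/-- `f(θ) ∈ ℂ^N` with `k`-th entry `e^{i 2π (k-1) cos θ}`. -/
def fvec (N : ℕ) (θ : ℝ) : Fin N → ℂ :=
  fun k => Complex.exp (Complex.I * (2 * (Real.pi : ℂ) * (k.val : ℂ) * (Real.cos θ : ℂ)))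

/-! The Schur complement of the identity block gives `Q - A Aᴴ ⪰ 0`, hence
`Σ_i |f(θ)ᴴ a_i|² = f(θ)ᴴ A Aᴴ f(θ) ≤ f(θ)ᴴ Q f(θ)`. As `f(θ)` is a geometric progression with
unimodular ratio `w`, `f(θ)ᴴ Q f(θ) = Σ_q w^q ⟨Q, Θ_q⟩`, and the trace constraints leave only the
term `q = 0`, which equals `1`. -/

theorem sum_norm_sq_vecMul_le_re_dotProduct_mulVec {m n : Type*} [Fintype m] [Fintype n]
    [DecidableEq n] {Q : Matrix m m ℂ} {A : Matrix m n ℂ}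
    (h : (fromBlocks Q A Aᴴ 1).PosSemidef) (x : m → ℂ) :
    ∑ i, ‖(star x ᵥ* A) i‖ ^ 2 ≤ (star x ⬝ᵥ Q *ᵥ x).re := by
  let _ : Invertible (1 : Matrix n n ℂ) := invertibleOne
  have hSchur : (Q - A * Aᴴ).PosSemidef := by
    simpa using (PosDef.fromBlocks₂₂ Q A PosDef.one).1 h
  have hle := hSchur.dotProduct_mulVec_nonneg x
  rw [sub_mulVec, dotProduct_sub, sub_nonneg] at hle
  have hAA : star x ⬝ᵥ (A * Aᴴ) *ᵥ x = ∑ i, ((‖(star x ᵥ* A) i‖ ^ 2 : ℝ) : ℂ) := by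
    rw [← mulVec_mulVec, dotProduct_mulVec, ← star_star x, ← star_vecMul, star_star]
    simp only [dotProduct, Pi.star_apply, RCLike.star_def, Complex.mul_conj,
      Complex.normSq_eq_norm_sq]
  simpa only [hAA, Complex.re_sum, Complex.ofReal_re] using (Complex.le_def.1 hle).1

theorem minner_conj_symm {m n : Type*} [Fintype m] [Fintype n] (A B : Matrix m n ℂ) :
    minner B A = starRingEnd ℂ (minner A B) := by
  simp [minner, map_sum, mul_comm]

section Toeplitz

variable {N : ℕ}

theorem minner_Theta_right (Q : Matrix (Fin N) (Fin N) ℂ) (q : ℤ) :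
    minner Q (Theta N q) = ∑ i, ∑ l, if (l.val : ℤ) - i.val = q then Q i l else 0 := by
  simp [minner, Theta, apply_ite]

theorem sum_mul_minner_Theta (g : ℤ → ℂ) (Q : Matrix (Fin N) (Fin N) ℂ) :
    ∑ q ∈ Icc (-((N : ℤ) - 1)) ((N : ℤ) - 1), g q * minner Q (Theta N q) =
      ∑ i, ∑ l, g ((l.val : ℤ) - i.val) * Q i l := by
  simp_rw [minner_Theta_right, mul_sum, mul_ite, mul_zero]
  rw [sum_comm]
  refine sum_congr rfl fun i _ => ?_
  rw [sum_comm]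
  refine sum_congr rfl fun l _ => ?_
  rw [sum_ite_eq]
  have := i.isLt; have := l.isLt
  rw [if_pos (by simp only [mem_Icc]; omega)]

theorem sum_weight_sub_mul_of_minner_Theta_eq {Q : Matrix (Fin N) (Fin N) ℂ}
    (htr : ∀ q : ℤ, -((N : ℤ) - 1) ≤ q → q ≤ (N : ℤ) - 1 →
      minner (Theta N q) Q = if q = 0 then 1 else 0) (g : ℤ → ℂ) :
    ∑ i, ∑ l, g ((l.val : ℤ) - i.val) * Q i l = if 0 < N then g 0 else 0 := by
  rw [← sum_mul_minner_Theta]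
  have hdiag : ∀ q ∈ Icc (-((N : ℤ) - 1)) ((N : ℤ) - 1),
      g q * minner Q (Theta N q) = if q = 0 then g q else 0 := by
    intro q hq
    rw [mem_Icc] at hq
    rw [minner_conj_symm, htr q hq.1 hq.2]
    split_ifs <;> simp
  rw [sum_congr rfl hdiag, sum_ite_eq']
  congr 1
  simp only [mem_Icc, eq_iff_iff]
  omega

theorem star_dotProduct_mulVec_pow {w : ℂ} (hw : ‖w‖ = 1)
    (Q : Matrix (Fin N) (Fin N) ℂ) :
    star (fun k : Fin N => w ^ k.val) ⬝ᵥ Q *ᵥ (fun k => w ^ k.val) =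
      ∑ i, ∑ l, w ^ ((l.val : ℤ) - i.val) * Q i l := by
  have hw0 : w ≠ 0 := norm_ne_zero_iff.1 (by simp [hw])
  have hstar : star w = w⁻¹ := by
    rw [Complex.inv_def, Complex.normSq_eq_norm_sq, hw]; simp
  simp only [dotProduct, mulVec, mul_sum, Pi.star_apply, star_pow, hstar]
  refine sum_congr rfl fun i _ => sum_congr rfl fun l _ => ?_
  rw [zpow_sub₀ hw0, zpow_natCast, zpow_natCast, inv_pow]
  ring

end Toeplitz

theorem fvec_eq_pow (N : ℕ) (θ : ℝ) :
    fvec N θ = fun k => Complex.exp ((2 * Real.pi * Real.cos θ : ℝ) * I) ^ k.val := by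
  funext k
  rw [fvec, ← Complex.exp_nat_mul]
  push_cast
  ring_nf

theorem bounded_dual_polynomial_general {N T : ℕ} (Q : Matrix (Fin N) (Fin N) ℂ)
    (A : Matrix (Fin N) (Fin T) ℂ)
    (hpsd : (Matrix.fromBlocks Q A Aᴴ (1 : Matrix (Fin T) (Fin T) ℂ)).PosSemidef)
    (htr : ∀ q : ℤ, -((N : ℤ) - 1) ≤ q → q ≤ (N : ℤ) - 1 →
      minner (Theta N q) Q = if q = 0 then 1 else 0) :
    ∀ θ ∈ Set.Ioo (0 : ℝ) Real.pi,
      ∑ i : Fin T, ‖star (fvec N θ) ⬝ᵥ (fun n => A n i)‖ ^ 2 ≤ 1 := by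
  intro θ _
  calc ∑ i : Fin T, ‖star (fvec N θ) ⬝ᵥ (fun n => A n i)‖ ^ 2
      ≤ (star (fvec N θ) ⬝ᵥ Q *ᵥ fvec N θ).re :=
        sum_norm_sq_vecMul_le_re_dotProduct_mulVec hpsd _
    _ = (if 0 < N then 1 else 0 : ℂ).re := by
        rw [fvec_eq_pow, star_dotProduct_mulVec_pow (Complex.norm_exp_ofReal_mul_I _),
          sum_weight_sub_mul_of_minner_Theta_eq htr, zpow_zero]
    _ ≤ 1 := by split_ifs <;> simp

/-- If the block matrix `[[Q, A],[Aᴴ, I]]` is PSD and `Q` satisfies the elementary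
Toeplitz trace constraints, then `Σ_i |f(θ)^H a_i|² ≤ 1` for all `θ ∈ (0,π)`. -/
theorem bounded_dual_polynomial {N T : ℕ} (Q : Matrix (Fin N) (Fin N) ℂ)
    (A : Matrix (Fin N) (Fin T) ℂ) (hQ : Q.IsHermitian)
    (hpsd : (Matrix.fromBlocks Q A Aᴴ (1 : Matrix (Fin T) (Fin T) ℂ)).PosSemidef)
    (htr : ∀ q : ℤ, -((N : ℤ) - 1) ≤ q → q ≤ (N : ℤ) - 1 →
      minner (Theta N q) Q = if q = 0 then 1 else 0) :
    ∀ θ ∈ Set.Ioo (0 : ℝ) Real.pi,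
      ∑ i : Fin T, ‖star (fvec N θ) ⬝ᵥ (fun n => A n i)‖ ^ 2 ≤ 1 :=
  bounded_dual_polynomial_general Q A hpsd htr
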